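/- arXiv:2105.10679 — 3 statements merged into one kernel-verified Lean document; each statement's English description precedes it below -/
import Mathlib

section
/- Let e be an equivalence relation on a finite set Ω and ρ the induced map sending a relation r on Ω to the relation ρ(r) = {(αe, βe) : (α,β) ∈ r} on the quotient Ω/e. If e commutes with relations r and s on Ω (i.e., e·r = r·e and e·s = s·e), then ρ(r·s) = ρ(r)·ρ(s). -/
open Set

def rcomp {Ω : Type*} (r s : Set (Ω × Ω)) : Set (Ω × Ω) :=
  {p | ∃ γ, (p.1, γ) ∈ r ∧ (γ, p.2) ∈ s}

def rconv {Ω : Type*} (r : Set (Ω × Ω)) : Set (Ω × Ω) := {p | (p.2, p.1) ∈ r}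

def rdiag (Ω : Type*) : Set (Ω × Ω) := {p | p.1 = p.2}

def IsEquivRel {Ω : Type*} (e : Set (Ω × Ω)) : Prop :=
  Equivalence (fun a b => (a, b) ∈ e)

/-- The smallest equivalence relation containing `r`. -/
def eqvClosure {Ω : Type*} (r : Set (Ω × Ω)) : Set (Ω × Ω) :=
  ⋂₀ {e | IsEquivRel e ∧ r ⊆ e}

/-- Join of two equivalence relations. -/
def rjoin {Ω : Type*} (e f : Set (Ω × Ω)) : Set (Ω × Ω) := eqvClosure (e ∪ f)

def IsClass {Ω : Type*} (e : Set (Ω × Ω)) (Δ : Set Ω) : Prop :=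
  ∃ α, Δ = {β | (α, β) ∈ e}

def setoidRel {Ω : Type*} (e : Setoid Ω) : Set (Ω × Ω) := {p | e.r p.1 p.2}

/-- The relation induced on the quotient `Ω/e` by a relation `r` on `Ω`. -/
def qmap {Ω : Type*} (e : Setoid Ω) (r : Set (Ω × Ω)) :
    Set (Quotient e × Quotient e) :=
  {p | ∃ a b : Ω, Quotient.mk e a = p.1 ∧ Quotient.mk e b = p.2 ∧ (a, b) ∈ r}

/-- Tensor product of relations. -/
def tensorRel {m : ℕ} {Ω : Fin m → Type*} (s : ∀ i, Set (Ω i × Ω i)) :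
    Set ((∀ i, Ω i) × (∀ i, Ω i)) :=
  {p | ∀ i, (p.1 i, p.2 i) ∈ s i}

def tensor2 {Ω₁ Ω₂ : Type*} (s₁ : Set (Ω₁ × Ω₁)) (s₂ : Set (Ω₂ × Ω₂)) :
    Set ((Ω₁ × Ω₂) × (Ω₁ × Ω₂)) :=
  {p | (p.1.1, p.2.1) ∈ s₁ ∧ (p.1.2, p.2.2) ∈ s₂}

/-- `PP e I` is the join of the equivalence relations `e i`, `i ∈ I`. -/
def PP {Ω : Type*} {m : ℕ} (e : Fin m → Set (Ω × Ω)) (I : Set (Fin m)) :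
    Set (Ω × Ω) :=
  eqvClosure (⋃ i ∈ I, e i)

/-- An atomic Cartesian decomposition, given as a family of equivalence relations. -/
def IsACDfam {Ω : Type*} {m : ℕ} (e : Fin m → Set (Ω × Ω)) : Prop :=
  0 < m ∧ (∀ i, IsEquivRel (e i)) ∧ (∀ i, e i ≠ rdiag Ω) ∧
  (∀ i j, rcomp (e i) (e j) = rcomp (e j) (e i)) ∧
  (∀ i, e i ∩ PP e ({i}ᶜ) = rdiag Ω) ∧
  (∀ i, rjoin (e i) (PP e ({i}ᶜ)) = Set.univ)

/-- Join of a set of relations. -/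
def joinAll {Ω : Type*} (B : Set (Set (Ω × Ω))) : Set (Ω × Ω) := eqvClosure (⋃₀ B)

/-- The `P`-complement of `e`: the join of the members of `P` other than `e`. -/
def pcompl {Ω : Type*} (P : Set (Set (Ω × Ω))) (e : Set (Ω × Ω)) : Set (Ω × Ω) :=
  joinAll (P \ {e})

/-- An atomic Cartesian decomposition, given as a set of equivalence relations. -/
def IsACD {Ω : Type*} (P : Set (Set (Ω × Ω))) : Prop :=
  P.Nonempty ∧ (∀ e ∈ P, IsEquivRel e ∧ e ≠ rdiag Ω) ∧
  (∀ e ∈ P, ∀ f ∈ P, rcomp e f = rcomp f e) ∧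
  (∀ e ∈ P, e ∩ pcompl P e = rdiag Ω ∧ rjoin e (pcompl P e) = Set.univ)

def IsPartitionOf {α : Type*} (P : Set α) (C : Set (Set α)) : Prop :=
  (∀ B ∈ C, B.Nonempty) ∧ (∀ B ∈ C, ∀ B' ∈ C, B ≠ B' → Disjoint B B') ∧ ⋃₀ C = P

/-- A coherent configuration on `Ω`. -/
structure CohCfg (Ω : Type*) where
  S : Set (Set (Ω × Ω))
  empty_not_mem : ∅ ∉ S
  cover : ∀ p : Ω × Ω, ∃ s ∈ S, p ∈ s
  pairwise_disjoint : ∀ s ∈ S, ∀ t ∈ S, s ≠ t → Disjoint s t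
  diag_union : ∀ s ∈ S, (s ∩ rdiag Ω).Nonempty → s ⊆ rdiag Ω
  conv_mem : ∀ s ∈ S, rconv s ∈ S
  inter_const : ∀ r ∈ S, ∀ s ∈ S, ∀ t ∈ S, ∀ p ∈ t, ∀ q ∈ t,
    ({γ : Ω | (p.1, γ) ∈ r ∧ (γ, p.2) ∈ s}).ncard
      = ({γ : Ω | (q.1, γ) ∈ r ∧ (γ, q.2) ∈ s}).ncard

/-- The valency of a basis relation (the common size of the rows over the left support). -/
noncomputable def valency {Ω : Type*} (s : Set (Ω × Ω)) : ℕ :=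
  sSup ((fun α => ({β | (α, β) ∈ s} : Set Ω).ncard) '' {α | ∃ β, (α, β) ∈ s})

def IsThick {Ω : Type*} (X : CohCfg Ω) : Prop :=
  ∀ s ∈ X.S, Disjoint s (rdiag Ω) → ¬(valency s = 1 ∧ valency (rconv s) = 1)

def IsParabolic {Ω : Type*} (X : CohCfg Ω) (e : Set (Ω × Ω)) : Prop :=
  IsEquivRel e ∧ ∀ s ∈ X.S, (s ∩ e).Nonempty → s ⊆ e

def Perp {Ω : Type*} (X : CohCfg Ω) (e f : Set (Ω × Ω)) : Prop :=
  ∀ x ∈ X.S, x ⊆ e → ∀ y ∈ X.S, y ⊆ f → (rcomp x y).Nonempty → rcomp x y ∈ X.S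

def Redundant {Ω : Type*} (X : CohCfg Ω) (s : Set (Ω × Ω)) : Prop :=
  ∃ x ∈ X.S, ∃ y ∈ X.S, Disjoint x (rdiag Ω) ∧ Disjoint y (rdiag Ω) ∧
    s = rcomp x y ∧ eqvClosure x ∩ eqvClosure y = rdiag Ω

theorem qmap_rcomp_subset {Ω : Type*} (e : Setoid Ω) (r s : Set (Ω × Ω)) :
    qmap e (rcomp r s) ⊆ rcomp (qmap e r) (qmap e s) := by
  rintro ⟨x, y⟩ ⟨a, b, rfl, rfl, γ, haγ, hγb⟩
  exact ⟨Quotient.mk e γ, ⟨a, γ, rfl, rfl, haγ⟩, ⟨γ, b, rfl, rfl, hγb⟩⟩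

theorem rcomp_qmap_subset_of_rcomp_setoidRel_subset {Ω : Type*} (e : Setoid Ω)
    (r s : Set (Ω × Ω)) (hr : rcomp r (setoidRel e) ⊆ rcomp (setoidRel e) r) :
    rcomp (qmap e r) (qmap e s) ⊆ qmap e (rcomp r s) := by
  rintro ⟨x, y⟩ ⟨z, ⟨a, γ₁, rfl, rfl, haγ₁⟩, ⟨γ₂, b, hγ₂, rfl, hγ₂b⟩⟩
  have hγ₁γ₂ : e.r γ₁ γ₂ := Quotient.exact hγ₂.symm
  have haγ₂ : (a, γ₂) ∈ rcomp r (setoidRel e) := ⟨γ₁, haγ₁, hγ₁γ₂⟩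
  obtain ⟨δ, haδ, hδγ₂⟩ := hr haγ₂
  exact ⟨δ, b, (Quotient.sound haδ).symm, rfl, γ₂, hδγ₂, hγ₂b⟩

theorem stmt3_general {Ω : Type*} (e : Setoid Ω) (r s : Set (Ω × Ω))
    (hr : rcomp (setoidRel e) r = rcomp r (setoidRel e)) :
    qmap e (rcomp r s) = rcomp (qmap e r) (qmap e s) :=
  (qmap_rcomp_subset e r s).antisymm
    (rcomp_qmap_subset_of_rcomp_setoidRel_subset e r s hr.ge)

/-- if `e` commutes with `r` and `s`, then `ρ(r·s) = ρ(r)·ρ(s)`. -/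
theorem stmt3 {Ω : Type*} [Fintype Ω] (e : Setoid Ω) (r s : Set (Ω × Ω))
    (hr : rcomp (setoidRel e) r = rcomp r (setoidRel e))
    (hs : rcomp (setoidRel e) s = rcomp s (setoidRel e)) :
    qmap e (rcomp r s) = rcomp (qmap e r) (qmap e s) :=
  stmt3_general e r s hr
end

section
/- Let P = {e_1,…,e_m} be a set of pairwise commuting equivalence relations on a finite set Ω, and for I ⊆ {1,…,m} let P_I denote the composition (equivalently, join) of all e_i with i ∈ I (with P_∅ the diagonal). Assume that for every i, e_i ∧ P_{M∖{i}} is the diagonal, where M = {1,…,m}. Then for all I, J ⊆ M, P_I ∧ P_J = P_{I∩J}. In particular, the map I ↦ P_I is a lattice isomorphism from the Boolean lattice 2^M onto {P_I : I ⊆ M}. -/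
open Set

/-
Commuting equivalence relations compose to their join, so `P_{I ∪ J} = P_I · P_J`; in particular
`P_I = P_{I ∖ J} · P_{I ∩ J}`. For disjoint `K` and `L` one gets `P_K ∧ P_L = 1` by induction
on `K`: if `α e_i γ P_K β` and `α P_L β`, then `γ P_{L ∪ {i}} β`, so `γ = β` by induction, and
`(α, β) ∈ e_i ∧ P_L ⊆ e_i ∧ P_{M ∖ {i}} = 1`. Now a pair `(α, β)` of `P_I ∧ P_J` factors as
`α P_{I ∖ J} γ P_{I ∩ J} β`; then also `α P_J γ`, and disjointness of `I ∖ J` and `J`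
forces `α = γ`.
-/

open SetRel

section Relations

variable {Ω : Type*}

lemma rcomp_eq_comp (r s : Set (Ω × Ω)) : rcomp r s = r ○ s := rfl

lemma rdiag_eq_id : rdiag Ω = SetRel.id := rfl

lemma isEquivRel_rdiag : IsEquivRel (rdiag Ω) := ⟨fun _ => rfl, Eq.symm, Eq.trans⟩

lemma IsEquivRel.rdiag_subset {g : Set (Ω × Ω)} (hg : IsEquivRel g) : rdiag Ω ⊆ g := by
  rintro ⟨a, b⟩ (rfl : a = b)
  exact hg.refl a

lemma isEquivRel_eqvClosure (r : Set (Ω × Ω)) : IsEquivRel (eqvClosure r) where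
  refl _ := mem_sInter.2 fun _ hg => hg.1.refl _
  symm h := mem_sInter.2 fun g hg => hg.1.symm (mem_sInter.1 h g hg)
  trans h h' := mem_sInter.2 fun g hg => hg.1.trans (mem_sInter.1 h g hg) (mem_sInter.1 h' g hg)

lemma subset_eqvClosure (r : Set (Ω × Ω)) : r ⊆ eqvClosure r :=
  fun _ hp => mem_sInter.2 fun _ hg => hg.2 hp

lemma eqvClosure_subset {r g : Set (Ω × Ω)} (hg : IsEquivRel g) (h : r ⊆ g) :
    eqvClosure r ⊆ g :=
  sInter_subset_of_mem ⟨hg, h⟩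

lemma eqvClosure_mono {r s : Set (Ω × Ω)} (h : r ⊆ s) : eqvClosure r ⊆ eqvClosure s :=
  eqvClosure_subset (isEquivRel_eqvClosure s) (h.trans (subset_eqvClosure s))

lemma eqvClosure_union_eqvClosure (r s : Set (Ω × Ω)) :
    eqvClosure (r ∪ eqvClosure s) = eqvClosure (r ∪ s) := by
  refine subset_antisymm ?_ (eqvClosure_mono (union_subset_union_right r (subset_eqvClosure s)))
  refine eqvClosure_subset (isEquivRel_eqvClosure _) (union_subset ?_ ?_)
  · exact subset_union_left.trans (subset_eqvClosure _)
  · exact eqvClosure_mono subset_union_right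

lemma rcomp_rdiag_comm (r : Set (Ω × Ω)) : rcomp r (rdiag Ω) = rcomp (rdiag Ω) r := by
  rw [rcomp_eq_comp, rcomp_eq_comp, rdiag_eq_id, comp_id, id_comp]

lemma rcomp_rcomp_comm {a b c : Set (Ω × Ω)} (hb : rcomp a b = rcomp b a)
    (hc : rcomp a c = rcomp c a) : rcomp a (rcomp b c) = rcomp (rcomp b c) a := by
  simp only [rcomp_eq_comp] at *
  rw [← comp_assoc, hb, comp_assoc, hc, comp_assoc]

lemma IsEquivRel.rcomp_of_comm {e f : Set (Ω × Ω)} (he : IsEquivRel e) (hf : IsEquivRel f)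
    (hef : rcomp e f = rcomp f e) : IsEquivRel (rcomp e f) where
  refl a := ⟨a, he.refl a, hf.refl a⟩
  symm := by
    rintro a b ⟨γ, haγ, hγb⟩
    rw [hef]
    exact ⟨γ, hf.symm hγb, he.symm haγ⟩
  trans := by
    rintro a b c ⟨γ, haγ, hγb⟩ ⟨δ, hbδ, hδc⟩
    obtain ⟨η, hγη, hηδ⟩ : (γ, δ) ∈ rcomp e f := hef ▸ ⟨b, hγb, hbδ⟩
    exact ⟨η, he.trans haγ hγη, hf.trans hηδ hδc⟩

lemma rcomp_eq_eqvClosure_union {e f : Set (Ω × Ω)} (he : IsEquivRel e) (hf : IsEquivRel f)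
    (hef : rcomp e f = rcomp f e) : rcomp e f = eqvClosure (e ∪ f) := by
  apply subset_antisymm
  · rintro ⟨a, b⟩ ⟨γ, haγ, hγb⟩
    exact (isEquivRel_eqvClosure _).trans
      (subset_eqvClosure _ (Or.inl haγ)) (subset_eqvClosure _ (Or.inr hγb))
  · refine eqvClosure_subset (he.rcomp_of_comm hf hef) (union_subset ?_ ?_)
    · exact fun p hp => ⟨p.2, hp, hf.refl _⟩
    · exact fun p hp => ⟨p.1, he.refl _, hp⟩

end Relations

section Joins

variable {Ω : Type*} {m : ℕ} (e : Fin m → Set (Ω × Ω))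

lemma isEquivRel_PP (I : Set (Fin m)) : IsEquivRel (PP e I) := isEquivRel_eqvClosure _

lemma PP_empty : PP e ∅ = rdiag Ω :=
  subset_antisymm (eqvClosure_subset isEquivRel_rdiag (by simp)) (isEquivRel_PP e ∅).rdiag_subset

lemma PP_mono {I J : Set (Fin m)} (h : I ⊆ J) : PP e I ⊆ PP e J :=
  eqvClosure_mono (biUnion_mono h fun _ _ => subset_rfl)

lemma PP_insert_eq_eqvClosure (i : Fin m) (K : Set (Fin m)) :
    PP e (insert i K) = eqvClosure (e i ∪ PP e K) := by
  rw [PP, biUnion_insert, PP, eqvClosure_union_eqvClosure]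

variable {e} (he : ∀ i, IsEquivRel (e i)) (hcomm : ∀ i j, rcomp (e i) (e j) = rcomp (e j) (e i))
include he hcomm

lemma rcomp_PP_comm (K : Set (Fin m)) (j : Fin m) :
    rcomp (e j) (PP e K) = rcomp (PP e K) (e j) := by
  induction K, K.toFinite using Set.Finite.induction_on generalizing j with
  | empty => rw [PP_empty]; exact rcomp_rdiag_comm _
  | @insert i K _ _ ih =>
    rw [PP_insert_eq_eqvClosure, ← rcomp_eq_eqvClosure_union (he i) (isEquivRel_PP e K) (ih i)]
    exact rcomp_rcomp_comm (hcomm j i) (ih j)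

lemma PP_insert (i : Fin m) (K : Set (Fin m)) : PP e (insert i K) = rcomp (e i) (PP e K) := by
  rw [PP_insert_eq_eqvClosure,
    rcomp_eq_eqvClosure_union (he i) (isEquivRel_PP e K) (rcomp_PP_comm he hcomm K i)]

lemma PP_union (I J : Set (Fin m)) : PP e (I ∪ J) = rcomp (PP e I) (PP e J) := by
  induction I, I.toFinite using Set.Finite.induction_on with
  | empty => rw [empty_union, PP_empty, rcomp_eq_comp, rdiag_eq_id, id_comp]
  | @insert i I _ _ ih =>
    simp only [insert_union, PP_insert he hcomm, ih, rcomp_eq_comp, comp_assoc]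

lemma PP_inter_PP_subset_rdiag (hmeet : ∀ i, e i ∩ PP e ({i}ᶜ) = rdiag Ω) {K L : Set (Fin m)}
    (hKL : Disjoint K L) : PP e K ∩ PP e L ⊆ rdiag Ω := by
  induction K, K.toFinite using Set.Finite.induction_on generalizing L with
  | empty => rw [PP_empty]; exact inter_subset_left
  | @insert i K hiK _ ih =>
    rintro ⟨a, b⟩ ⟨hab, habL⟩
    obtain ⟨γ, haγ, hγb⟩ : (a, b) ∈ rcomp (e i) (PP e K) := PP_insert he hcomm i K ▸ hab
    have hiL : i ∉ L := disjoint_left.1 hKL (mem_insert i K)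
    have hγbL : (γ, b) ∈ PP e (insert i L) := PP_insert he hcomm i L ▸ ⟨a, (he i).symm haγ, habL⟩
    have hK : Disjoint K (insert i L) :=
      disjoint_insert_right.2 ⟨hiK, (disjoint_insert_left.1 hKL).2⟩
    obtain rfl : γ = b := ih hK ⟨hγb, hγbL⟩
    rw [← hmeet i]
    exact ⟨haγ, PP_mono e (subset_compl_singleton_iff.2 hiL) habL⟩

end Joins

theorem stmt6_general {Ω : Type*} {m : ℕ} (e : Fin m → Set (Ω × Ω))
    (he : ∀ i, IsEquivRel (e i))
    (hcomm : ∀ i j, rcomp (e i) (e j) = rcomp (e j) (e i))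
    (hmeet : ∀ i, e i ∩ PP e ({i}ᶜ) = rdiag Ω) :
    ∀ I J : Set (Fin m), PP e I ∩ PP e J = PP e (I ∩ J) := by
  intro I J
  refine subset_antisymm ?_ (subset_inter (PP_mono e inter_subset_left)
    (PP_mono e inter_subset_right))
  rintro ⟨a, b⟩ ⟨habI, habJ⟩
  rw [← sdiff_union_inter I J, PP_union he hcomm] at habI
  obtain ⟨γ, haγ, hγb⟩ := habI
  have hγbJ : (γ, b) ∈ PP e J := PP_mono e inter_subset_right hγb
  have haγJ : (a, γ) ∈ PP e J := (isEquivRel_PP e J).trans habJ ((isEquivRel_PP e J).symm hγbJ)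
  obtain rfl : a = γ := PP_inter_PP_subset_rdiag he hcomm hmeet disjoint_sdiff_left ⟨haγ, haγJ⟩
  exact hγb

/-- for pairwise commuting equivalence relations with
`e_i ∧ P_{M∖{i}} = 1_Ω`, one has `P_I ∧ P_J = P_{I∩J}` for all `I, J`. -/
theorem stmt6 {Ω : Type*} [Fintype Ω] {m : ℕ} (e : Fin m → Set (Ω × Ω))
    (he : ∀ i, IsEquivRel (e i))
    (hcomm : ∀ i j, rcomp (e i) (e j) = rcomp (e j) (e i))
    (hmeet : ∀ i, e i ∩ PP e ({i}ᶜ) = rdiag Ω) :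
    ∀ I J : Set (Fin m), PP e I ∩ PP e J = PP e (I ∩ J) :=
  stmt6_general e he hcomm hmeet
end

section
/- Let 𝒳 = (Ω,S) be a coherent configuration, and let s, x, y ∈ S be basis relations with x, y irreflexive, s = x·y, and ⟨x⟩ ∧ ⟨y⟩ = 1_Ω, where ⟨r⟩ denotes the smallest equivalence relation containing r. Then the valency of s satisfies n_s = n_x · n_y. -/
open Set

/-
Fix `α` and write `s(α)` for the set of `s`-neighbours of `α`. Since `s = x·y`, the row `s(α)` is
the union of the rows `y(γ)` over `γ ∈ x(α)`. Two such `γ, γ'` are `⟨x⟩`-equivalent, and any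
common point of `y(γ)` and `y(γ')` would make them `⟨y⟩`-equivalent as well; as
`⟨x⟩ ∧ ⟨y⟩ = 1_Ω`, the union is disjoint. Each `y(γ)` has `n_y` elements: counting `δ ∈ y(γ)`
is counting the `(y, s*)`-paths from `γ` to `α`, an intersection number constant on `x*`.
-/

def row {Ω : Type*} (r : Set (Ω × Ω)) (α : Ω) : Set Ω := {β | (α, β) ∈ r}

lemma mem_row_rcomp {Ω : Type*} {x y : Set (Ω × Ω)} {α δ : Ω} :
    δ ∈ row (rcomp x y) α ↔ ∃ γ ∈ row x α, δ ∈ row y γ := Iff.rfl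

section EqvClosure

variable {Ω : Type*} {r : Set (Ω × Ω)}

lemma mem_eqvClosure_of_same_source {a c c' : Ω} (h : c ∈ row r a) (h' : c' ∈ row r a) :
    (c, c') ∈ eqvClosure r := by
  rw [eqvClosure, Set.mem_sInter]
  rintro e ⟨he, hre⟩
  exact he.trans (he.symm (hre h)) (hre h')

lemma mem_eqvClosure_of_same_target {a a' c : Ω} (h : c ∈ row r a) (h' : c ∈ row r a') :
    (a, a') ∈ eqvClosure r := by
  rw [eqvClosure, Set.mem_sInter]
  rintro e ⟨he, hre⟩
  exact he.trans (hre h) (he.symm (hre h'))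

end EqvClosure

lemma ncard_row_rcomp_eq_mul {Ω : Type*} [Finite Ω] {x y : Set (Ω × Ω)}
    (hmeet : eqvClosure x ∩ eqvClosure y ⊆ rdiag Ω) {α : Ω} {n : ℕ}
    (hrows : ∀ γ ∈ row x α, (row y γ).ncard = n) :
    (row (rcomp x y) α).ncard = (row x α).ncard * n := by
  classical
  cases nonempty_fintype Ω
  have hdisj :
      (↑(row x α).toFinset : Set Ω).PairwiseDisjoint (fun γ => (row y γ).toFinset) := by
    intro γ hγ γ' hγ' hne
    simp only [Set.coe_toFinset] at hγ hγ'
    refine Finset.disjoint_left.2 fun δ hδ hδ' => hne (hmeet (a := (γ, γ')) ⟨?_, ?_⟩)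
    · exact mem_eqvClosure_of_same_source hγ hγ'
    · exact mem_eqvClosure_of_same_target (Set.mem_toFinset.1 hδ) (Set.mem_toFinset.1 hδ')
  have hunion : (row (rcomp x y) α).toFinset =
      (row x α).toFinset.biUnion (fun γ => (row y γ).toFinset) := by
    ext δ
    simp only [Set.mem_toFinset, Finset.mem_biUnion, mem_row_rcomp]
  rw [Set.ncard_eq_toFinset_card', hunion, Finset.card_biUnion hdisj,
    Finset.sum_congr rfl fun γ hγ => ?_, Finset.sum_const, smul_eq_mul,
    Set.ncard_eq_toFinset_card']
  rw [← Set.ncard_eq_toFinset_card']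
  exact hrows γ (Set.mem_toFinset.1 hγ)

namespace CohCfg

variable {Ω : Type*} (X : CohCfg Ω)

lemma nonempty_of_mem {s : Set (Ω × Ω)} (hs : s ∈ X.S) : s.Nonempty :=
  Set.nonempty_iff_ne_empty.2 fun h => X.empty_not_mem (h ▸ hs)

lemma nonempty_paths_of_mem [Finite Ω] {r s t : Set (Ω × Ω)} (hr : r ∈ X.S) (hs : s ∈ X.S)
    (ht : t ∈ X.S) {p q : Ω × Ω} (hp : p ∈ t) (hq : q ∈ t)
    (h : {γ | (p.1, γ) ∈ r ∧ (γ, p.2) ∈ s}.Nonempty) :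
    {γ | (q.1, γ) ∈ r ∧ (γ, q.2) ∈ s}.Nonempty := by
  rw [← Set.ncard_pos (Set.toFinite _), ← X.inter_const r hr s hs t ht p hp q hq]
  exact (Set.ncard_pos (Set.toFinite _)).2 h

lemma ncard_row_eq [Finite Ω] {s : Set (Ω × Ω)} (hs : s ∈ X.S) {α β α' β' : Ω}
    (h : β ∈ row s α) (h' : β' ∈ row s α') : (row s α).ncard = (row s α').ncard := by
  obtain ⟨t, ht, hαt⟩ := X.cover (α, α)
  have htd : t ⊆ rdiag Ω := X.diag_union t ht ⟨_, hαt, rfl⟩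
  -- `α'` lies in the support of the diagonal relation `t ∋ (α, α)`, as `c_{t s}^s ≠ 0`.
  obtain ⟨γ, hγt, -⟩ := X.nonempty_paths_of_mem ht hs hs h h' ⟨α, hαt, h⟩
  obtain rfl : α' = γ := htd hγt
  have hpaths : ∀ a, {γ | (a, γ) ∈ s ∧ (γ, a) ∈ rconv s} = row s a := fun _ =>
    Set.ext fun _ => and_self_iff
  simpa only [hpaths] using
    X.inter_const s hs (rconv s) (X.conv_mem s hs) t ht (α, α) hαt (α', α') hγt

lemma valency_eq_ncard_row [Finite Ω] {s : Set (Ω × Ω)} (hs : s ∈ X.S) {α β : Ω}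
    (h : β ∈ row s α) :
    valency s = (row s α).ncard := by
  have himg : (fun a => (row s a).ncard) '' {a | ∃ b, (a, b) ∈ s} = {(row s α).ncard} := by
    ext n
    simp only [Set.mem_image, Set.mem_ofPred_eq, Set.mem_singleton_iff]
    constructor
    · rintro ⟨a, ⟨b, hab⟩, rfl⟩
      exact X.ncard_row_eq hs hab h
    · rintro rfl
      exact ⟨α, ⟨β, h⟩, rfl⟩
  exact (congrArg sSup himg).trans (csSup_singleton _)

lemma ncard_row_eq_of_rcomp_mem {x y : Set (Ω × Ω)} (hx : x ∈ X.S) (hy : y ∈ X.S)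
    (hxy : rcomp x y ∈ X.S) {α γ γ' : Ω} (hγ : γ ∈ row x α) (hγ' : γ' ∈ row x α) :
    (row y γ).ncard = (row y γ').ncard := by
  have hpaths : ∀ γ ∈ row x α, {δ | (γ, δ) ∈ y ∧ (δ, α) ∈ rconv (rcomp x y)} = row y γ :=
    fun γ hγ => by
      ext δ
      exact and_iff_left_of_imp fun hδ => ⟨γ, hγ, hδ⟩
  have hc := X.inter_const y hy _ (X.conv_mem _ hxy) (rconv x) (X.conv_mem x hx)
    (γ, α) hγ (γ', α) hγ'
  rwa [hpaths γ hγ, hpaths γ' hγ'] at hc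

end CohCfg

theorem stmt13_general {Ω : Type*} [Fintype Ω] (X : CohCfg Ω) (s x y : Set (Ω × Ω))
    (hs : s ∈ X.S) (hx : x ∈ X.S) (hy : y ∈ X.S)
    (hcomp : s = rcomp x y)
    (hmeet : eqvClosure x ∩ eqvClosure y = rdiag Ω) :
    valency s = valency x * valency y := by
  subst hcomp
  obtain ⟨⟨α, β⟩, hαβ⟩ := X.nonempty_of_mem hs
  obtain ⟨γ₀, hγ₀, hβ⟩ := id hαβ
  have hrows : ∀ γ ∈ row x α, (row y γ).ncard = valency y := fun γ hγ => by
    rw [X.valency_eq_ncard_row hy hβ]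
    exact X.ncard_row_eq_of_rcomp_mem hx hy hs hγ hγ₀
  rw [X.valency_eq_ncard_row hs hαβ, ncard_row_rcomp_eq_mul hmeet.le hrows,
    X.valency_eq_ncard_row hx hγ₀]

/-- if `s = x·y` with `x, y` irreflexive and `⟨x⟩ ∧ ⟨y⟩ = 1_Ω`,
then `n_s = n_x · n_y`. -/
theorem stmt13 {Ω : Type*} [Fintype Ω] (X : CohCfg Ω) (s x y : Set (Ω × Ω))
    (hs : s ∈ X.S) (hx : x ∈ X.S) (hy : y ∈ X.S)
    (hxi : Disjoint x (rdiag Ω)) (hyi : Disjoint y (rdiag Ω))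
    (hcomp : s = rcomp x y)
    (hmeet : eqvClosure x ∩ eqvClosure y = rdiag Ω) :
    valency s = valency x * valency y :=
  stmt13_general X s x y hs hx hy hcomp hmeet
end
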